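/- arXiv:1809.04224 — 2 statements merged into one kernel-verified Lean document; each statement's English description precedes it below -/
import Mathlib

section
/- Let p and q be real numbers with 0 < p < 1/2 and 1 - p ≤ q ≤ 1. Then 2·p·(1-p) ≤ U_s(p,q) ≤ U_s(p,1) = 2·p, so 1 ≤ U_s(p,1)/U_s(p,q) ≤ 1/(1-p) < 2; similarly, p ≤ FPR_s(p,q) ≤ FPR_s(p,1) = p/(1-p), so 1 ≤ FPR_s(p,1)/FPR_s(p,q) ≤ 1/(1-p) < 2. -/
/-- The strategic school's expected utility. -/
noncomputable def U_s (p q : ℝ) : ℝ := 1 + (p + q - 2 * p * q) * (2 * p - 1) / (q - p)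

/-- The strategic school's false positive rate. -/
noncomputable def FPR_s (p q : ℝ) : ℝ := 1 - q + q * (p + q - 1) / (q - p)

/-!
Both quantities have the closed forms `FPR_s p q = p (2q - 1) / (q - p)` and
`U_s p q = 2 (1 - p) · FPR_s p q`, so every claim about `U_s` is the corresponding claim
about `FPR_s` scaled by `2 (1 - p)`, and the two ratios coincide. Since
`(2q - 1) / (q - p) = 2 - (1 - 2p) / (q - p)` is increasing in `q` for `p < 1/2`, it runs
from `1` at `q = 1 - p` to `1 / (1 - p)` at `q = 1`.
-/

section StrategicSchool

variable {p q : ℝ}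

theorem FPR_s_eq (hqp : q ≠ p) : FPR_s p q = p * (2 * q - 1) / (q - p) := by
  have hqp' : q - p ≠ 0 := sub_ne_zero.2 hqp
  unfold FPR_s
  field_simp
  ring

theorem U_s_eq_mul_FPR_s (hqp : q ≠ p) : U_s p q = 2 * (1 - p) * FPR_s p q := by
  have hqp' : q - p ≠ 0 := sub_ne_zero.2 hqp
  rw [FPR_s_eq hqp]
  unfold U_s
  field_simp
  ring

theorem FPR_s_one (hp : p ≠ 1) : FPR_s p 1 = p / (1 - p) := by
  rw [FPR_s_eq (Ne.symm hp)]
  ring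

theorem le_FPR_s (hp : 0 ≤ p) (hpq : p < q) (hq : 1 - p ≤ q) : p ≤ FPR_s p q := by
  rw [FPR_s_eq hpq.ne', le_div_iff₀ (sub_pos.2 hpq)]
  nlinarith

theorem FPR_s_le_FPR_s_one (hp : 0 ≤ p) (hp2 : p ≤ 1 / 2) (hpq : p < q) (hq : q ≤ 1) :
    FPR_s p q ≤ FPR_s p 1 := by
  have hp1 : 0 < 1 - p := by linarith
  rw [FPR_s_eq hpq.ne', FPR_s_one (by linarith : p < 1).ne, div_le_div_iff₀ (sub_pos.2 hpq) hp1]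
  -- the difference of the two sides is `p (1 - 2p) (1 - q)`
  nlinarith [mul_nonneg (mul_nonneg hp (by linarith : (0 : ℝ) ≤ 1 - 2 * p))
    (sub_nonneg.2 hq)]

end StrategicSchool

/-- For a strategic school: 2p(1-p) ≤ U_s(p,q) ≤ U_s(p,1) = 2p, so
1 ≤ U_s(p,1)/U_s(p,q) ≤ 1/(1-p) < 2; similarly p ≤ FPR_s(p,q) ≤ FPR_s(p,1) =
p/(1-p), so 1 ≤ FPR_s(p,1)/FPR_s(p,q) ≤ 1/(1-p) < 2. -/
theorem strategic_accuracy_impact (p q : ℝ) (hp0 : 0 < p) (hp : p < 1/2)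
    (hq1 : 1 - p ≤ q) (hq2 : q ≤ 1) :
    (2 * p * (1 - p) ≤ U_s p q ∧ U_s p q ≤ U_s p 1 ∧ U_s p 1 = 2 * p ∧
      1 ≤ U_s p 1 / U_s p q ∧ U_s p 1 / U_s p q ≤ 1 / (1 - p) ∧
      (1 : ℝ) / (1 - p) < 2) ∧
    (p ≤ FPR_s p q ∧ FPR_s p q ≤ FPR_s p 1 ∧ FPR_s p 1 = p / (1 - p) ∧
      1 ≤ FPR_s p 1 / FPR_s p q ∧ FPR_s p 1 / FPR_s p q ≤ 1 / (1 - p) ∧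
      (1 : ℝ) / (1 - p) < 2) := by
  have hpq : p < q := by linarith
  have hp1 : 0 < 1 - p := by linarith
  have hscale : 0 < 2 * (1 - p) := by positivity
  have hlo : p ≤ FPR_s p q := le_FPR_s hp0.le hpq hq1
  have hhi : FPR_s p q ≤ FPR_s p 1 := FPR_s_le_FPR_s_one hp0.le hp.le hpq hq2
  have hF1 : FPR_s p 1 = p / (1 - p) := FPR_s_one (by linarith : p < 1).ne
  have hUq : U_s p q = 2 * (1 - p) * FPR_s p q := U_s_eq_mul_FPR_s hpq.ne'
  have hUone : U_s p 1 = 2 * (1 - p) * FPR_s p 1 := U_s_eq_mul_FPR_s (by linarith : p < 1).ne'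
  have hU1 : U_s p 1 = 2 * p := by
    rw [hUone, hF1]
    field_simp
  have hFratio_lo : 1 ≤ FPR_s p 1 / FPR_s p q := (one_le_div (hp0.trans_le hlo)).2 hhi
  have hFratio_hi : FPR_s p 1 / FPR_s p q ≤ 1 / (1 - p) := by
    calc FPR_s p 1 / FPR_s p q ≤ FPR_s p 1 / p :=
          div_le_div_of_nonneg_left (hp0.le.trans (hlo.trans hhi)) hp0 hlo
      _ = 1 / (1 - p) := by rw [hF1]; field_simp
  have hUratio : U_s p 1 / U_s p q = FPR_s p 1 / FPR_s p q := by
    rw [hUq, hUone, mul_div_mul_left _ _ hscale.ne']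
  have hhalf : (1 : ℝ) / (1 - p) < 2 := by rw [div_lt_iff₀ hp1]; linarith
  refine ⟨⟨?_, ?_, hU1, hUratio ▸ hFratio_lo, hUratio ▸ hFratio_hi, hhalf⟩,
    ⟨hlo, hhi, hF1, hFratio_lo, hFratio_hi, hhalf⟩⟩
  · rw [hUq]; nlinarith
  · rw [hUq, hUone]
    exact mul_le_mul_of_nonneg_left hhi hscale.le
end

section
/- Let p, q, q' be real numbers with 0 < p < 1/2 and 1 - p ≤ q' < q ≤ 1. Then 1 ≤ U_s(p,q)/U_r(p,q) ≤ 2, and the ratio is increasing in grade accuracy: U_s(p,q')/U_r(p,q') ≤ U_s(p,q)/U_r(p,q). -/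
/-- The revealing school's expected utility. -/
noncomputable def U_r (p q : ℝ) : ℝ := p * q + (1 - p) * (1 - q)

/-!
Clearing the denominator `q - p`, one has `U_s p q = 2p(1-p)(2q-1)/(q-p)`, and both bounds
become sign statements of explicit factorisations:
`(q - p)(U_s - U_r) = (p + q - 1)(p(1-q) + q(1-p))` and
`(q - p)(2 U_r - U_s) = 2(1 - 2p) q (1 - q)`.
Monotonicity in `q` is the same kind of statement: after cross-multiplying the two ratios,
the difference factors as `(1 - 2p)(q - q')(q q' + (1 - q)(1 - q'))`.
-/

section Utility

variable {p q : ℝ}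

lemma U_r_pos (hp0 : 0 < p) (hp1 : p < 1) (hq0 : 0 ≤ q) (hq1 : q ≤ 1) : 0 < U_r p q := by
  unfold U_r
  nlinarith [mul_nonneg hp0.le hq0, mul_nonneg (sub_nonneg.2 hp1.le) (sub_nonneg.2 hq1)]

lemma U_s_eq (h : q ≠ p) : U_s p q = 2 * p * (1 - p) * (2 * q - 1) / (q - p) := by
  have : q - p ≠ 0 := sub_ne_zero.2 h
  unfold U_s
  field_simp
  ring

lemma U_s_sub_U_r (h : q ≠ p) :
    U_s p q - U_r p q = (p + q - 1) * (p * (1 - q) + q * (1 - p)) / (q - p) := by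
  have : q - p ≠ 0 := sub_ne_zero.2 h
  rw [U_s_eq h, U_r]
  field_simp
  ring

lemma two_mul_U_r_sub_U_s (h : q ≠ p) :
    2 * U_r p q - U_s p q = 2 * (1 - 2 * p) * q * (1 - q) / (q - p) := by
  have : q - p ≠ 0 := sub_ne_zero.2 h
  rw [U_s_eq h, U_r]
  field_simp
  ring

lemma U_r_le_U_s (hp0 : 0 ≤ p) (hpq : p < q) (hq1 : q ≤ 1) (hpq1 : 1 ≤ p + q) :
    U_r p q ≤ U_s p q := by
  rw [← sub_nonneg, U_s_sub_U_r hpq.ne']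
  have hmix : 0 ≤ p * (1 - q) + q * (1 - p) := by
    have : 0 ≤ q := hp0.trans hpq.le
    have : 0 ≤ 1 - q := by linarith
    have : 0 ≤ 1 - p := by linarith
    positivity
  exact div_nonneg (mul_nonneg (by linarith) hmix) (by linarith)

lemma U_s_le_two_mul_U_r (hp0 : 0 ≤ p) (hp : p ≤ 1 / 2) (hpq : p < q) (hq1 : q ≤ 1) :
    U_s p q ≤ 2 * U_r p q := by
  rw [← sub_nonneg, two_mul_U_r_sub_U_s hpq.ne']
  have hq0 : 0 ≤ q := hp0.trans hpq.le
  have : 0 ≤ 2 * (1 - 2 * p) * q * (1 - q) := by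
    have : 0 ≤ 1 - 2 * p := by linarith
    have : 0 ≤ 1 - q := by linarith
    positivity
  exact div_nonneg this (by linarith)

lemma monotoneOn_U_s_div_U_r (hp0 : 0 < p) (hp : p ≤ 1 / 2) :
    MonotoneOn (fun q ↦ U_s p q / U_r p q) (Set.Ioc p 1) := by
  rintro q' ⟨hpq', hq'1⟩ q ⟨hpq, hq1⟩ hq'q
  have hUr' : 0 < U_r p q' := U_r_pos hp0 (by linarith) (by linarith) hq'1
  have hUr : 0 < U_r p q := U_r_pos hp0 (by linarith) (by linarith) hq1
  have cross : (2 * q - 1) * ((q' - p) * U_r p q') - (2 * q' - 1) * ((q - p) * U_r p q) =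
      (1 - 2 * p) * (q - q') * (q * q' + (1 - q) * (1 - q')) := by
    unfold U_r; ring
  have hcross : 0 ≤ (1 - 2 * p) * (q - q') * (q * q' + (1 - q) * (1 - q')) := by
    have : 0 ≤ 1 - 2 * p := by linarith
    have : 0 ≤ q - q' := by linarith
    have : 0 ≤ 1 - q := by linarith
    have : 0 ≤ 1 - q' := by linarith
    have : 0 ≤ q := by linarith
    have : 0 ≤ q' := by linarith
    positivity
  have hcoef : 0 ≤ 2 * p * (1 - p) := by
    have : 0 ≤ 1 - p := by linarith
    positivity
  show U_s p q' / U_r p q' ≤ U_s p q / U_r p q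
  rw [U_s_eq hpq.ne', U_s_eq hpq'.ne', div_div, div_div, mul_div_assoc, mul_div_assoc]
  refine mul_le_mul_of_nonneg_left ?_ hcoef
  rw [div_le_div_iff₀ (mul_pos (by linarith) hUr') (mul_pos (by linarith) hUr)]
  linarith

end Utility

/-- The ratio of a strategic school's to a revealing school's utility lies in
[1,2] and is increasing in grade accuracy. -/
theorem utility_ratio_bounds_and_monotone (p q q' : ℝ) (hp0 : 0 < p) (hp : p < 1/2)
    (hq'1 : 1 - p ≤ q') (hq' : q' < q) (hq2 : q ≤ 1) :
    (1 ≤ U_s p q / U_r p q ∧ U_s p q / U_r p q ≤ 2) ∧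
    U_s p q' / U_r p q' ≤ U_s p q / U_r p q := by
  have hpq : p < q := by linarith
  have hUr : 0 < U_r p q := U_r_pos hp0 (by linarith) (by linarith) hq2
  refine ⟨⟨?_, ?_⟩, ?_⟩
  · rw [one_le_div₀ hUr]
    exact U_r_le_U_s hp0.le hpq hq2 (by linarith)
  · rw [div_le_iff₀ hUr]
    exact U_s_le_two_mul_U_r hp0.le hp.le hpq hq2
  · exact monotoneOn_U_s_div_U_r hp0 hp.le ⟨by linarith, by linarith⟩ ⟨hpq, hq2⟩ hq'.le
end
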